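/- arXiv:1911.12545 — 3 statements merged into one kernel-verified Lean document; each statement's English description precedes it below -/
import Mathlib

section
/- Let $A$ be an $n\times n$ symmetric matrix with minimum eigenvalue $\lambda_1 < 0$, $b \in \mathbb{R}^n$, $\rho > 0$. The optimal value of $\min_x \frac{1}{2}x^T A x + b^T x + \frac{\rho}{3}\|x\|^3$ equals the optimal value of $\min\{\frac{1}{2}x^T(A-\lambda_1 I)x + b^T x + \frac{\rho}{3}y^{3/2} + \frac{\lambda_1}{2}y : \|x\|^2 \le y\}$. -/
open Matrix

noncomputable def f1 {n : ℕ} (A : Matrix (Fin n) (Fin n) ℝ) (b : Fin n → ℝ) (ρ : ℝ)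
    (x : Fin n → ℝ) : ℝ :=
  (1/2) * (x ⬝ᵥ A.mulVec x) + b ⬝ᵥ x + (ρ/3) * Real.sqrt (x ⬝ᵥ x) ^ 3

noncomputable def f2 {n : ℕ} (A : Matrix (Fin n) (Fin n) ℝ) (b : Fin n → ℝ) (ρ lam1 : ℝ)
    (x : Fin n → ℝ) (y : ℝ) : ℝ :=
  (1/2) * (x ⬝ᵥ (A - lam1 • (1 : Matrix (Fin n) (Fin n) ℝ)).mulVec x) + b ⬝ᵥ x
    + (ρ/3) * y ^ ((3:ℝ)/2) + (lam1/2) * y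

lemma dp_self_nonneg {n : ℕ} (x : Fin n → ℝ) : 0 ≤ x ⬝ᵥ x :=
  Finset.sum_nonneg fun i _ => mul_self_nonneg _

lemma sqrt_cube (q : ℝ) (hq : 0 ≤ q) : Real.sqrt q ^ 3 = q ^ ((3:ℝ)/2) := by
  rw [Real.sqrt_eq_rpow, ← Real.rpow_natCast (q ^ ((1:ℝ)/2)) 3, ← Real.rpow_mul hq]
  norm_num

lemma f_eq {n : ℕ} (A : Matrix (Fin n) (Fin n) ℝ) (b : Fin n → ℝ) (ρ lam1 : ℝ)
    (x : Fin n → ℝ) : f1 A b ρ x = f2 A b ρ lam1 x (x ⬝ᵥ x) := by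
  unfold f1 f2
  rw [sub_mulVec, smul_mulVec, one_mulVec, dotProduct_sub, dotProduct_smul,
    sqrt_cube _ (dp_self_nonneg x), smul_eq_mul]
  ring

/-- The optimal values of (CRS) and of its convex reformulation (CP) coincide. -/
theorem stmt_1 {n : ℕ} (A : Matrix (Fin n) (Fin n) ℝ) (hA : A.IsSymm)
    (b : Fin n → ℝ) (ρ lam1 : ℝ) (hρ : 0 < ρ) (hlam1 : lam1 < 0)
    (hlb : ∀ x : Fin n → ℝ, lam1 * (x ⬝ᵥ x) ≤ x ⬝ᵥ A.mulVec x)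
    (heig : ∃ v : Fin n → ℝ, v ⬝ᵥ v = 1 ∧ A.mulVec v = lam1 • v)
    -- both problems attain their minima:
    (xstar : Fin n → ℝ) (hopt1 : ∀ x : Fin n → ℝ, f1 A b ρ xstar ≤ f1 A b ρ x)
    (tx : Fin n → ℝ) (ty : ℝ) (hfeas : tx ⬝ᵥ tx ≤ ty)
    (hopt2 : ∀ x : Fin n → ℝ, ∀ y : ℝ, x ⬝ᵥ x ≤ y → f2 A b ρ lam1 tx ty ≤ f2 A b ρ lam1 x y) :
    f1 A b ρ xstar = f2 A b ρ lam1 tx ty := by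
  obtain ⟨v, hv1, hv2⟩ := heig
  have h1 : f2 A b ρ lam1 tx ty ≤ f1 A b ρ xstar := by
    rw [f_eq A b ρ lam1 xstar]
    exact hopt2 xstar _ le_rfl
  -- now the other direction
  set M : Matrix (Fin n) (Fin n) ℝ := A - lam1 • (1 : Matrix (Fin n) (Fin n) ℝ) with hM
  have hMv : M.mulVec v = 0 := by
    rw [hM, sub_mulVec, hv2, smul_mulVec, one_mulVec, sub_self]
  have hMsymm : M.IsSymm := by
    rw [hM, Matrix.IsSymm, Matrix.transpose_sub, hA, Matrix.transpose_smul,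
      Matrix.transpose_one]
  set c : ℝ := tx ⬝ᵥ v with hc
  set r : ℝ := Real.sqrt (c ^ 2 + (ty - tx ⬝ᵥ tx)) with hrdef
  have hdisc : 0 ≤ c ^ 2 + (ty - tx ⬝ᵥ tx) := by nlinarith [sq_nonneg c]
  have hr2 : r ^ 2 = c ^ 2 + (ty - tx ⬝ᵥ tx) := Real.sq_sqrt hdisc
  have hrabs : |c| ≤ r := by
    rw [hrdef, ← Real.sqrt_sq_eq_abs]
    exact Real.sqrt_le_sqrt (by nlinarith)
  set s : ℝ := if 0 ≤ b ⬝ᵥ v then -c - r else -c + r with hs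
  have hs_root : s ^ 2 + 2 * c * s + (tx ⬝ᵥ tx - ty) = 0 := by
    rw [hs]; split <;> nlinarith [hr2]
  have hs_sign : s * (b ⬝ᵥ v) ≤ 0 := by
    rw [hs]; split_ifs with h
    · exact mul_nonpos_of_nonpos_of_nonneg (by have := neg_le_abs c; linarith) h
    · exact mul_nonpos_of_nonneg_of_nonpos (by have := le_abs_self c; linarith)
        (le_of_not_ge h)
  set x : Fin n → ℝ := tx + s • v with hx
  have hxx : x ⬝ᵥ x = ty := by
    rw [hx, dotProduct_add, add_dotProduct, add_dotProduct, dotProduct_smul,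
      smul_dotProduct, smul_dotProduct, dotProduct_smul, hv1,
      dotProduct_comm v tx]
    simp only [smul_eq_mul, ← hc]
    nlinarith [hs_root]
  have hMx : M.mulVec x = M.mulVec tx := by
    rw [hx, mulVec_add, mulVec_smul, hMv, smul_zero, add_zero]
  have hvMtx : v ⬝ᵥ M.mulVec tx = 0 := by
    rw [dotProduct_mulVec, ← Matrix.mulVec_transpose, hMsymm.eq, hMv, zero_dotProduct]
  have key : f1 A b ρ x = f2 A b ρ lam1 tx ty + s * (b ⬝ᵥ v) := by
    rw [f_eq A b ρ lam1 x, hxx]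
    unfold f2
    rw [← hM, hMx, hx, add_dotProduct, smul_dotProduct, smul_eq_mul, hvMtx,
      dotProduct_add, dotProduct_smul, smul_eq_mul]
    ring
  have h2 : f1 A b ρ xstar ≤ f2 A b ρ lam1 tx ty := by
    have := hopt1 x
    rw [key] at this
    linarith [hs_sign]
  linarith
end

section
/- Let $A$ be an $n\times n$ symmetric matrix with minimum eigenvalue $\lambda_1 < 0$, and let $(\tilde x, \tilde y)$ be an optimal solution of $\min\{\frac{1}{2}x^T(A-\lambda_1 I)x + b^T x + \frac{\rho}{3}y^{3/2} + \frac{\lambda_1}{2}y : \|x\|^2 \le y\}$ with $\|\tilde x\|^2 = \tilde y$. Then $\tilde x$ is a global minimizer of $f_1(x) = \frac{1}{2}x^T A x + b^T x + \frac{\rho}{3}\|x\|^3$. -/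
open Matrix

lemma f2_eq_f1 {n : ℕ} (A : Matrix (Fin n) (Fin n) ℝ) (b : Fin n → ℝ) (ρ lam1 : ℝ)
    (x : Fin n → ℝ) : f2 A b ρ lam1 x (x ⬝ᵥ x) = f1 A b ρ x := by
  have hnn : (0:ℝ) ≤ x ⬝ᵥ x := by
    simpa [dotProduct] using Finset.sum_nonneg fun i _ => mul_self_nonneg (x i)
  have hpow : (x ⬝ᵥ x) ^ ((3:ℝ)/2) = Real.sqrt (x ⬝ᵥ x) ^ 3 := by
    rw [Real.sqrt_eq_rpow, ← Real.rpow_natCast ((x ⬝ᵥ x) ^ ((1:ℝ)/2)) 3,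
      ← Real.rpow_mul hnn]
    norm_num
  have hmv : (A - lam1 • (1 : Matrix (Fin n) (Fin n) ℝ)).mulVec x
      = A.mulVec x - lam1 • x := by
    rw [Matrix.sub_mulVec, Matrix.smul_mulVec, Matrix.one_mulVec]
  rw [f2, f1, hpow, hmv]
  have : x ⬝ᵥ (A.mulVec x - lam1 • x) = x ⬝ᵥ A.mulVec x - lam1 * (x ⬝ᵥ x) := by
    rw [dotProduct_sub, dotProduct_smul, smul_eq_mul]
  rw [this]; ring

/-- If `(tx, ty)` is optimal for the convex reformulation with `‖tx‖² = ty`,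
then `tx` is a global minimizer of the cubic-regularized objective `f₁`. -/
theorem stmt_2 {n : ℕ} (A : Matrix (Fin n) (Fin n) ℝ) (hA : A.IsSymm)
    (b : Fin n → ℝ) (ρ lam1 : ℝ) (hρ : 0 < ρ) (hlam1 : lam1 < 0)
    (hlb : ∀ x : Fin n → ℝ, lam1 * (x ⬝ᵥ x) ≤ x ⬝ᵥ A.mulVec x)
    (heig : ∃ v : Fin n → ℝ, v ⬝ᵥ v = 1 ∧ A.mulVec v = lam1 • v)
    (tx : Fin n → ℝ) (ty : ℝ) (hty : tx ⬝ᵥ tx = ty)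
    (hopt : ∀ x : Fin n → ℝ, ∀ y : ℝ, x ⬝ᵥ x ≤ y → f2 A b ρ lam1 tx ty ≤ f2 A b ρ lam1 x y) :
    ∀ x : Fin n → ℝ, f1 A b ρ tx ≤ f1 A b ρ x := by
  intro x
  have h := hopt x (x ⬝ᵥ x) le_rfl
  rw [f2_eq_f1] at h
  calc f1 A b ρ tx = f2 A b ρ lam1 tx ty := by rw [← hty, f2_eq_f1]
    _ ≤ f1 A b ρ x := h
end

section
/- Let $B = \{(x,y) \in \mathbb{R}^n \times \mathbb{R} : \|x\|^2 \le y,\ y \ge l\}$ for some $l > 0$, and $S = \{(x,y) : \|x\|^2 \le y\}$. For $(x_0,y_0) \in \mathbb{R}^n \times \mathbb{R}$, let $(x_1,y_1) = \Pi_S(x_0,y_0)$ be the projection onto $S$. Then the projection of $(x_0,y_0)$ onto $B$ equals: $(x_1,y_1)$ if $y_1 \ge l$; $(x_0, l)$ if $y_1 < l$ and $\|x_0\| < \sqrt{l}$; and $(\sqrt{l}\, x_0/\|x_0\|,\ l)$ otherwise. -/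
open Matrix

private lemma dot_self_nonneg' {n : ℕ} (a : Fin n → ℝ) : 0 ≤ a ⬝ᵥ a :=
  Finset.sum_nonneg fun _ _ => mul_self_nonneg _

private lemma dot_cauchy' {n : ℕ} (a b : Fin n → ℝ) : (a ⬝ᵥ b)^2 ≤ (a ⬝ᵥ a) * (b ⬝ᵥ b) := by
  simpa [dotProduct, sq] using Finset.sum_mul_sq_le_sq_mul_sq Finset.univ a b

private lemma easy_case (L y0 y v : ℝ) (h2 : 0 ≤ v) (hy : L ≤ y) (h0 : y0 < L) :
    0 + (L - y0)^2 ≤ v + (y - y0)^2 := by nlinarith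

private lemma cs_to_lin (C u s D : ℝ) (hc : C^2 ≤ u^2 * D) (hD : D ≤ s^2)
    (hu : 0 ≤ u) (hs : 0 ≤ s) : C ≤ u * s := by
  nlinarith [sq_nonneg (C - u*s), sq_nonneg (C + u*s), mul_nonneg hu hs]

private lemma hii2lem (sA sy u B : ℝ) (h : sA^2 - 2*B + u^2 ≤ (sy - u)^2) (hB : B ≤ u*sA) :
    sA^2 - 2*u*sA ≤ sy^2 - 2*u*sy := by nlinarith

private lemma sy_le_sA (sA sy u : ℝ) (hsAsy : sA ≤ sy) (hsyu : sy < u)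
    (h : sA^2 - 2*u*sA ≤ sy^2 - 2*u*sy) : sy ≤ sA := by
  nlinarith [mul_nonneg (sub_nonneg.2 hsAsy) (by linarith : (0:ℝ) ≤ 2*u - sy - sA)]

private lemma to_key (u sl sy y0 B : ℝ) (hB : B ≤ u*sy)
    (h : sy^2 - 2*B + u^2 + (sy^2 - y0)^2 ≤ (sl - u)^2 + (sl^2 - y0)^2) :
    (u - sy)^2 + (sy^2 - y0)^2 ≤ (sl - u)^2 + (sl^2 - y0)^2 := by nlinarith

private lemma key_star (u sl sy y0 : ℝ) (hsy0 : 0 ≤ sy) (hsysl : sy < sl) (hslu : sl ≤ u)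
    (hy0 : y0 ≤ sy^2)
    (hk : (u - sy)^2 + (sy^2 - y0)^2 ≤ (sl - u)^2 + (sl^2 - y0)^2) :
    u ≤ sl + 2*sl*(sl^2 - y0) := by
  have h1' : 2*u*(sl - sy) ≤ (sl - sy)*((sl + sy)*(1 + sl^2 + sy^2 - 2*y0)) := by
    nlinarith [hk]
  have h2' : 2*u ≤ (sl + sy)*(1 + sl^2 + sy^2 - 2*y0) := by
    nlinarith [h1', hsysl]
  have hsl0 : 0 < sl := lt_of_le_of_lt hsy0 hsysl
  have hT : (0:ℝ) ≤ 1 + sl^2 + sy^2 - 2*y0 := by nlinarith [hy0, hsl0]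
  have p1 : 0 ≤ (sl - sy) * (1 + sl^2 + sy^2 - 2*y0) := mul_nonneg (by linarith) hT
  have p2 : 0 ≤ (2*sl*(sl + sy)) * (sl - sy) :=
    mul_nonneg (by nlinarith [hsl0, hsy0]) (by linarith)
  have h3' : (sl + sy)*(1 + sl^2 + sy^2 - 2*y0) ≤ 2*sl*(1 + 2*sl^2 - 2*y0) := by
    nlinarith [p1, p2]
  nlinarith [h2', h3']

private lemma final_step (sl u sY P Q y y0 l : ℝ) (hsl2 : sl^2 = l)
    (hsl0 : 0 < sl) (hu0 : 0 < u) (hslu : sl ≤ u) (hslY : sl ≤ sY)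
    (hsY2 : sY^2 = y) (hy0l : y0 < l)
    (hstar : u ≤ sl + 2*sl*(l - y0))
    (hP : P ≤ u*sY)
    (hQp : 0 ≤ Q - 2*(sl/u)*P + sl^2) :
    (sl - u)^2 + (l - y0)^2 ≤ Q - 2*P + u^2 + (y - y0)^2 := by
  subst hsl2
  subst hsY2
  have hP' : (sl - u)*sY ≤ (sl/u - 1)*P := by
    have hcle : sl/u - 1 ≤ 0 := by
      have : sl/u ≤ 1 := by rw [div_le_one hu0]; exact hslu
      linarith
    have h := mul_le_mul_of_nonpos_left hP hcle
    have he : (sl/u - 1)*(u*sY) = (sl - u)*sY := by field_simp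
    linarith [he ▸ h]
  have h4 : 2*sl*(sl^2 - y0)*(sY - sl) ≤ (sl^2 - y0)*(sY^2 - sl^2) := by
    nlinarith [mul_nonneg (mul_nonneg (by linarith : (0:ℝ) ≤ sl^2 - y0)
      (by linarith : (0:ℝ) ≤ sY - sl)) (by linarith : (0:ℝ) ≤ sY - sl)]
  have h5 : 0 ≤ (sl - u)*(sY - sl) + 2*sl*(sl^2 - y0)*(sY - sl) := by
    nlinarith [mul_nonneg (by linarith : (0:ℝ) ≤ sY - sl)
      (by linarith [hstar] : (0:ℝ) ≤ 2*sl*(sl^2 - y0) - (u - sl))]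
  have hE : 0 ≤ ((sl/u)*P - sl^2 - P + sl*u) + (sl^2 - y0)*(sY^2 - sl^2) := by
    nlinarith [hP', h4, h5]
  nlinarith [hQp, hE, sq_nonneg (sY^2 - sl^2)]

/-- Projection onto `B = {(x,y) : ‖x‖² ≤ y, y ≥ l}` in terms of the projection
`(x₁,y₁)` of `(x₀,y₀)` onto `S = {(x,y) : ‖x‖² ≤ y}`. -/
theorem stmt_10 {n : ℕ} (l : ℝ) (hl : 0 < l) (x0 x1 : Fin n → ℝ) (y0 y1 : ℝ)
    -- (x₁, y₁) is the Euclidean projection of (x₀, y₀) onto S: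
    (hS1 : x1 ⬝ᵥ x1 ≤ y1)
    (hS2 : ∀ x : Fin n → ℝ, ∀ y : ℝ, x ⬝ᵥ x ≤ y →
      (x1 - x0) ⬝ᵥ (x1 - x0) + (y1 - y0)^2 ≤ (x - x0) ⬝ᵥ (x - x0) + (y - y0)^2) :
    -- the claimed point is in B and minimizes the distance over B:
    let p : (Fin n → ℝ) × ℝ :=
      if l ≤ y1 then (x1, y1)
      else if Real.sqrt (x0 ⬝ᵥ x0) < Real.sqrt l then (x0, l)
      else ((Real.sqrt l / Real.sqrt (x0 ⬝ᵥ x0)) • x0, l)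
    p.1 ⬝ᵥ p.1 ≤ p.2 ∧ l ≤ p.2 ∧
    ∀ x : Fin n → ℝ, ∀ y : ℝ, x ⬝ᵥ x ≤ y → l ≤ y →
      (p.1 - x0) ⬝ᵥ (p.1 - x0) + (p.2 - y0)^2 ≤ (x - x0) ⬝ᵥ (x - x0) + (y - y0)^2 := by
  intro p
  have hN0 : 0 ≤ x0 ⬝ᵥ x0 := dot_self_nonneg' x0
  have hA0 : 0 ≤ x1 ⬝ᵥ x1 := dot_self_nonneg' x1
  have hy1nn : 0 ≤ y1 := le_trans hA0 hS1
  have hy01 : y0 ≤ y1 := by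
    rcases le_total y0 y1 with h | h
    · exact h
    · have h2 := hS2 x1 y0 (le_trans hS1 h)
      have h3 : (y1 - y0)^2 = 0 := le_antisymm (by nlinarith [h2]) (sq_nonneg _)
      have h4 := pow_eq_zero_iff (n := 2) (by norm_num) |>.mp h3
      linarith [sub_eq_zero.mp h4]
  by_cases hc1 : l ≤ y1
  · simp only [p, if_pos hc1]
    exact ⟨hS1, hc1, fun x y hx _ => hS2 x y hx⟩
  push_neg at hc1
  have hy0l : y0 < l := lt_of_le_of_lt hy01 hc1
  by_cases hc2 : Real.sqrt (x0 ⬝ᵥ x0) < Real.sqrt l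
  · -- easy case: p = (x0, l)
    have hNl : x0 ⬝ᵥ x0 < l := by
      nlinarith [Real.sq_sqrt hN0, Real.sq_sqrt hl.le, Real.sqrt_nonneg (x0 ⬝ᵥ x0), hc2]
    simp only [p, if_neg (not_le.2 hc1), if_pos hc2]
    refine ⟨hNl.le, le_rfl, ?_⟩
    intro x y hx hy
    have h1 : (x0 - x0) ⬝ᵥ (x0 - x0) = 0 := by simp
    rw [h1]
    exact easy_case l y0 y _ (dot_self_nonneg' _) hy hy0l
  -- hard case
  push_neg at hc2
  simp only [p, if_neg (not_le.2 hc1), if_neg (not_lt.2 hc2)]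
  set sl := Real.sqrt l with hsl_def
  set u := Real.sqrt (x0 ⬝ᵥ x0) with hu_def
  set sy := Real.sqrt y1 with hsy_def
  have hsl2 : sl^2 = l := Real.sq_sqrt hl.le
  have hu2 : u^2 = x0 ⬝ᵥ x0 := Real.sq_sqrt hN0
  have hsy2 : sy^2 = y1 := Real.sq_sqrt hy1nn
  have hsl0 : 0 < sl := Real.sqrt_pos.2 hl
  have hu0 : 0 < u := lt_of_lt_of_le hsl0 hc2
  have hsy0 : 0 ≤ sy := Real.sqrt_nonneg _
  have hsysl : sy < sl := Real.sqrt_lt_sqrt hy1nn hc1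
  set sA := Real.sqrt (x1 ⬝ᵥ x1) with hsA_def
  have hsA2 : sA^2 = x1 ⬝ᵥ x1 := Real.sq_sqrt hA0
  have hsA0 : 0 ≤ sA := Real.sqrt_nonneg _
  have hsAsy : sA ≤ sy := Real.sqrt_le_sqrt hS1
  have hBA : x0 ⬝ᵥ x1 ≤ u * sA :=
    cs_to_lin _ _ _ (x1 ⬝ᵥ x1) (by rw [hu2]; exact dot_cauchy' x0 x1) hsA2.ge hu0.le hsA0
  have hx1exp : (x1 - x0) ⬝ᵥ (x1 - x0) = x1 ⬝ᵥ x1 - 2*(x0 ⬝ᵥ x1) + x0 ⬝ᵥ x0 := by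
    simp [sub_dotProduct, dotProduct_sub, dotProduct_comm x1 x0]
    ring
  have hTest : ∀ c t : ℝ, c^2 * (x0 ⬝ᵥ x0) ≤ t →
      x1 ⬝ᵥ x1 - 2*(x0 ⬝ᵥ x1) + x0 ⬝ᵥ x0 + (y1 - y0)^2 ≤ (c-1)^2*(x0 ⬝ᵥ x0) + (t - y0)^2 := by
    intro c t h
    have hfeas : (c • x0) ⬝ᵥ (c • x0) = c^2 * (x0 ⬝ᵥ x0) := by
      simp [smul_dotProduct, dotProduct_smul, smul_eq_mul]; ring
    have h2 := hS2 (c • x0) t (by rw [hfeas]; exact h)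
    have hexp : (c • x0 - x0) ⬝ᵥ (c • x0 - x0) = (c-1)^2 * (x0 ⬝ᵥ x0) := by
      simp [sub_dotProduct, dotProduct_sub, smul_dotProduct, dotProduct_smul, smul_eq_mul,
        dotProduct_comm x0]
      ring
    rw [hexp, hx1exp] at h2
    exact h2
  -- step (ii): ‖x1‖ = √y1
  have hii : x1 ⬝ᵥ x1 - 2*(x0 ⬝ᵥ x1) + x0 ⬝ᵥ x0 ≤ (sy - u)^2 := by
    have hfe : (sy/u)^2 * (x0 ⬝ᵥ x0) ≤ y1 := by
      rw [← hu2]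
      have h : (sy/u)^2 * u^2 = sy^2 := by field_simp
      rw [h, hsy2]
    have h := hTest (sy/u) y1 hfe
    have he : (sy/u - 1)^2 * (x0 ⬝ᵥ x0) = (sy - u)^2 := by
      rw [← hu2]; field_simp
    rw [he] at h; linarith
  have hsA_eq : sA = sy := by
    refine le_antisymm hsAsy (sy_le_sA sA sy u hsAsy (lt_of_lt_of_le hsysl hc2) ?_)
    exact hii2lem sA sy u _ (by rw [hsA2, hu2]; exact hii) hBA
  -- step (iii): key bound u ≤ sl + 2 sl (l - y0)
  have hiii : x1 ⬝ᵥ x1 - 2*(x0 ⬝ᵥ x1) + x0 ⬝ᵥ x0 + (y1 - y0)^2 ≤ (sl - u)^2 + (l - y0)^2 := by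
    have hfe : (sl/u)^2 * (x0 ⬝ᵥ x0) ≤ l := by
      rw [← hu2]
      have h : (sl/u)^2 * u^2 = sl^2 := by field_simp
      rw [h, hsl2]
    have h := hTest (sl/u) l hfe
    have he : (sl/u - 1)^2 * (x0 ⬝ᵥ x0) = (sl - u)^2 := by
      rw [← hu2]; field_simp
    rw [he] at h; exact h
  have hBsy : x0 ⬝ᵥ x1 ≤ u * sy := by rw [← hsA_eq]; exact hBA
  have hA_eq : x1 ⬝ᵥ x1 = sy^2 := by rw [← hsA2, hsA_eq]
  rw [hA_eq, ← hu2, ← hsy2, ← hsl2] at hiii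
  have hkey := to_key u sl sy y0 (x0 ⬝ᵥ x1) hBsy hiii
  have hstar : u ≤ sl + 2*sl*(l - y0) := by
    have := key_star u sl sy y0 hsy0 hsysl hc2 (by rw [hsy2]; exact hy01) hkey
    rw [hsl2] at this; exact this
  -- feasibility of p
  have hpfeas : ((sl/u) • x0) ⬝ᵥ ((sl/u) • x0) = l := by
    have h1 : ((sl/u) • x0) ⬝ᵥ ((sl/u) • x0) = (sl/u)^2 * (x0 ⬝ᵥ x0) := by
      simp [smul_dotProduct, dotProduct_smul, smul_eq_mul]; ring
    rw [h1, ← hu2]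
    have h : (sl/u)^2 * u^2 = sl^2 := by field_simp
    rw [h, hsl2]
  refine ⟨hpfeas.le, le_rfl, ?_⟩
  intro x y hx hy
  set sY := Real.sqrt y with hsY_def
  have hy0' : 0 ≤ y := le_trans hl.le hy
  have hsY2 : sY^2 = y := Real.sq_sqrt hy0'
  have hsY0 : 0 ≤ sY := Real.sqrt_nonneg _
  have hslY : sl ≤ sY := Real.sqrt_le_sqrt hy
  have hP : x0 ⬝ᵥ x ≤ u * sY :=
    cs_to_lin _ _ _ (x ⬝ᵥ x) (by rw [hu2]; exact dot_cauchy' x0 x)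
      (by rw [hsY2]; exact hx) hu0.le hsY0
  have hLexp : ((sl/u) • x0 - x0) ⬝ᵥ ((sl/u) • x0 - x0) = (sl - u)^2 := by
    have h1 : ((sl/u) • x0 - x0) ⬝ᵥ ((sl/u) • x0 - x0) = (sl/u - 1)^2 * (x0 ⬝ᵥ x0) := by
      simp [sub_dotProduct, dotProduct_sub, smul_dotProduct, dotProduct_smul, smul_eq_mul,
        dotProduct_comm x0]
      ring
    rw [h1, ← hu2]; field_simp
  have hRexp : (x - x0) ⬝ᵥ (x - x0) = x ⬝ᵥ x - 2*(x0 ⬝ᵥ x) + u^2 := by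
    rw [hu2]
    simp [sub_dotProduct, dotProduct_sub, dotProduct_comm x x0]
    ring
  have hQp : 0 ≤ x ⬝ᵥ x - 2*(sl/u)*(x0 ⬝ᵥ x) + sl^2 := by
    have h := dot_self_nonneg' (x - (sl/u) • x0)
    have he : (x - (sl/u) • x0) ⬝ᵥ (x - (sl/u) • x0)
        = x ⬝ᵥ x - 2*(sl/u)*(x0 ⬝ᵥ x) + (sl/u)^2 * (x0 ⬝ᵥ x0) := by
      simp [sub_dotProduct, dotProduct_sub, smul_dotProduct, dotProduct_smul, smul_eq_mul,
        dotProduct_comm x x0]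
      ring
    have he2 : (sl/u)^2 * (x0 ⬝ᵥ x0) = sl^2 := by
      rw [← hu2]; field_simp
    rw [he, he2] at h; exact h
  rw [hLexp, hRexp]
  exact final_step sl u sY (x0 ⬝ᵥ x) (x ⬝ᵥ x) y y0 l hsl2 hsl0 hu0 hc2 hslY hsY2 hy0l
    hstar hP hQp
end
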